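/- arXiv:1903.07375 — 8 statements merged into one kernel-verified Lean document; each statement's English description precedes it below -/
import Mathlib

section
/- Let q be a prime power, e a positive integer with gcd(e, q-1) = 1, and let 1/e denote the multiplicative inverse of e modulo q-1. Then for all u in GF(q)*, v, b, c in GF(q): u·({x^e + bx + c : x in GF(q)}) + v = {x^e + u^{1-1/e}·b·x + (cu+v) : x in GF(q)}. In particular, the general affine group GA_1(GF(q)) permutes the sets B_{(f,b,c)} = {x^e + bx + c : x}. -/
theorem stmt_1 {F : Type*} [Field F] [Fintype F] (q e e' : ℕ) (hq : Fintype.card F = q)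
    (he : Nat.gcd e (q - 1) = 1) (he' : e * e' ≡ 1 [MOD q - 1])
    (u : F) (hu : u ≠ 0) (v b c : F) :
    (fun y => u * y + v) '' {y : F | ∃ x : F, y = x ^ e + b * x + c} =
      {y : F | ∃ x : F, y = x ^ e + (u * (u ^ e')⁻¹) * b * x + (c * u + v)} := by
  have hn : u ^ (q - 1) = 1 := by
    rw [← hq]; exact FiniteField.pow_card_sub_one_eq_one u hu
  have key : ∀ m k : ℕ, m % (q - 1) = k % (q - 1) → u ^ m = u ^ k := by
    intro m k h
    rw [← Nat.div_add_mod m (q - 1), ← Nat.div_add_mod k (q - 1), pow_add, pow_add,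
      pow_mul, pow_mul, hn, one_pow, one_pow, h]
  have hue : (u ^ e') ^ e = u := by
    rw [← pow_mul, mul_comm]
    have := key (e * e') 1 he'
    simpa using this
  have hune : (u ^ e') ≠ 0 := pow_ne_zero _ hu
  ext y
  simp only [Set.mem_image, Set.mem_setOf_eq]
  constructor
  · rintro ⟨_, ⟨x, rfl⟩, rfl⟩
    refine ⟨u ^ e' * x, ?_⟩
    rw [mul_pow, hue]
    field_simp
    ring
  · rintro ⟨x, rfl⟩
    refine ⟨((u ^ e')⁻¹ * x) ^ e + b * ((u ^ e')⁻¹ * x) + c, ⟨(u ^ e')⁻¹ * x, rfl⟩, ?_⟩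
    rw [mul_pow, inv_pow, hue]
    field_simp
    ring
end

section
/- Let m ≥ 3 be odd and q = 2^m. Then gcd(e(e-1), q-1) = 1 for e = 2^h + 1 whenever gcd(h, m) = 1. -/
/-!
Since `2 ^ m - 1` is odd, it is coprime to `2 ^ h`. A common divisor of `2 ^ h + 1` and
`2 ^ m - 1` divides `2 ^ (2 * h) - 1 = (2 ^ h + 1) * (2 ^ h - 1)` as well, hence divides
`gcd (2 ^ (2 * h) - 1) (2 ^ m - 1) = 2 ^ gcd (2 * h) m - 1`, and `gcd (2 * h) m = 1` because `m`
is odd and coprime to `h`.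
-/

namespace Nat

theorem pow_add_one_dvd_pow_two_mul_sub_one (a h : ℕ) : a ^ h + 1 ∣ a ^ (2 * h) - 1 := by
  have hfactor := Nat.sq_sub_sq (a ^ h) 1
  rw [one_pow, ← pow_mul, mul_comm] at hfactor
  exact Dvd.intro _ hfactor.symm

theorem gcd_pow_add_one_pow_sub_one_dvd (a h m : ℕ) :
    gcd (a ^ h + 1) (a ^ m - 1) ∣ a ^ gcd (2 * h) m - 1 := by
  rw [← pow_sub_one_gcd_pow_sub_one]
  exact gcd_dvd_gcd_of_dvd_left _ (pow_add_one_dvd_pow_two_mul_sub_one a h)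

theorem coprime_two_pow_add_one_two_pow_sub_one {h m : ℕ} (hm : Odd m) (hh : Coprime h m) :
    Coprime (2 ^ h + 1) (2 ^ m - 1) := by
  have hgcd : gcd (2 * h) m = 1 := Coprime.mul_left hm.coprime_two_left hh
  simpa [hgcd] using gcd_pow_add_one_pow_sub_one_dvd 2 h m

theorem odd_two_pow_sub_one {m : ℕ} (hm : m ≠ 0) : Odd (2 ^ m - 1) :=
  Even.sub_odd Nat.one_le_two_pow (even_pow.mpr ⟨even_two, hm⟩) odd_one

end Nat

theorem stmt_3_general (m h : ℕ) (hmo : Odd m)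
    (hh : Nat.gcd h m = 1) :
    Nat.gcd ((2 ^ h + 1) * ((2 ^ h + 1) - 1)) (2 ^ m - 1) = 1 := by
  rw [Nat.add_sub_cancel]
  refine Nat.Coprime.mul_left (Nat.coprime_two_pow_add_one_two_pow_sub_one hmo hh) ?_
  exact (Nat.odd_two_pow_sub_one hmo.pos.ne').coprime_two_left.pow_left h

theorem stmt_3 (m h : ℕ) (hm : 3 ≤ m) (hmo : Odd m) (hpos : 0 < h)
    (hh : Nat.gcd h m = 1) :
    Nat.gcd ((2 ^ h + 1) * ((2 ^ h + 1) - 1)) (2 ^ m - 1) = 1 :=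
  stmt_3_general m h hmo hh
end

section
/- Let m ≥ 3 be odd and q = 2^m. Then gcd(e(e-1), q-1) = 1 for e = 2^{2h} - 2^h + 1 whenever gcd(h, m) = 1. -/
/-- If `d` divides both `2^a - 1` and `2^b - 1`, then `d` divides `2^(gcd a b) - 1`. -/
lemma aux_dvd_gcd_mersenne (d : ℕ) : ∀ a b : ℕ, d ∣ 2 ^ a - 1 → d ∣ 2 ^ b - 1 →
    d ∣ 2 ^ Nat.gcd a b - 1 := by
  intro a b
  induction a, b using Nat.gcd.induction with
  | H0 b => intro _ hb; simpa using hb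
  | H1 a b ha ih =>
    intro h1 h2
    rw [Nat.gcd_rec]
    apply ih _ h1
    -- show d ∣ 2 ^ (b % a) - 1
    have hd1 : d ∣ 2 ^ (a * (b / a)) - 1 := by
      refine h1.trans ?_
      have := Nat.sub_dvd_pow_sub_pow (2 ^ a) 1 (b / a)
      simpa [← pow_mul] using this
    have hsplit : 2 ^ b = 2 ^ (b % a) * 2 ^ (a * (b / a)) := by
      rw [← pow_add]; congr 1; exact (Nat.mod_add_div b a).symm
    have hkey : 2 ^ b - 2 ^ (b % a) = 2 ^ (b % a) * (2 ^ (a * (b / a)) - 1) := by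
      rw [Nat.mul_sub, mul_one, ← hsplit]
    have hd2 : d ∣ 2 ^ b - 2 ^ (b % a) := hkey ▸ Dvd.dvd.mul_left hd1 _
    have hle : 2 ^ (b % a) ≤ 2 ^ b := Nat.pow_le_pow_right (by norm_num) (Nat.mod_le b a)
    have heq : 2 ^ (b % a) - 1 = (2 ^ b - 1) - (2 ^ b - 2 ^ (b % a)) := by
      have : 1 ≤ 2 ^ (b % a) := Nat.one_le_two_pow
      omega
    rw [heq]
    exact Nat.dvd_sub h2 hd2

theorem stmt_4 (m h : ℕ) (hm : 3 ≤ m) (hmo : Odd m) (hpos : 0 < h)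
    (hh : Nat.gcd h m = 1) :
    Nat.gcd ((2 ^ (2 * h) - 2 ^ h + 1) * ((2 ^ (2 * h) - 2 ^ h + 1) - 1)) (2 ^ m - 1) = 1 := by
  set e := 2 ^ (2 * h) - 2 ^ h + 1 with he
  have hle : 2 ^ h ≤ 2 ^ (2 * h) := Nat.pow_le_pow_right (by norm_num) (by omega)
  have h1 : (1 : ℕ) ≤ 2 ^ h := Nat.one_le_two_pow
  have h2eq : (2:ℕ) ^ (2 * h) = 2 ^ h * 2 ^ h := by rw [← pow_add]; congr 1; omega
  -- coprime e (2^m - 1)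
  have hcop1 : Nat.Coprime e (2 ^ m - 1) := by
    -- e ∣ 2^(3h) + 1 ∣ 2^(6h) - 1
    have hmul : e * (2 ^ h + 1) = 2 ^ (3 * h) + 1 := by
      have h3 : (2:ℕ) ^ (3 * h) = 2 ^ h * 2 ^ h * 2 ^ h := by
        rw [← pow_add, ← pow_add]; congr 1; omega
      rw [he, h2eq, h3]
      have hle' : 2 ^ h ≤ 2 ^ h * 2 ^ h := Nat.le_mul_of_pos_left _ (by positivity)
      zify [hle']
      ring
    have hediv : e ∣ 2 ^ (6 * h) - 1 := by
      have h6 : (2:ℕ) ^ (6 * h) - 1 = (2 ^ (3 * h) + 1) * (2 ^ (3 * h) - 1) := by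
        have hsp : (2:ℕ) ^ (6 * h) = 2 ^ (3 * h) * 2 ^ (3 * h) := by
          rw [← pow_add]; congr 1; omega
        have h1' : (1:ℕ) ≤ 2 ^ (3 * h) := Nat.one_le_two_pow
        have hle'' : 2 ^ (3 * h) ≤ 2 ^ (3 * h) * 2 ^ (3 * h) :=
          Nat.le_mul_of_pos_left _ (by positivity)
        rw [hsp, Nat.add_mul, one_mul, Nat.mul_sub, mul_one]
        omega
      rw [h6]
      exact Dvd.dvd.mul_right ⟨2 ^ h + 1, hmul.symm⟩ _
    set d := Nat.gcd e (2 ^ m - 1) with hd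
    have hdd : d ∣ 2 ^ Nat.gcd (6 * h) m - 1 :=
      aux_dvd_gcd_mersenne d (6 * h) m ((Nat.gcd_dvd_left _ _).trans hediv)
        (Nat.gcd_dvd_right _ _)
    have hg6 : Nat.gcd (6 * h) m = Nat.gcd 6 m := Nat.Coprime.gcd_mul_right_cancel 6 hh
    have h2m : Nat.Coprime 2 m := Nat.coprime_two_left.mpr hmo
    have hg63 : Nat.gcd 6 m = Nat.gcd 3 m := by
      have h6eq : (6 : ℕ) = 2 * 3 := by norm_num
      rw [h6eq]; exact Nat.Coprime.gcd_mul_left_cancel 3 h2m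
    have h3m : Nat.gcd 3 m = 1 ∨ Nat.gcd 3 m = 3 :=
      (Nat.dvd_prime Nat.prime_three).mp (Nat.gcd_dvd_left 3 m)
    rcases h3m with h3m | h3m
    · rw [hg6, hg63, h3m] at hdd
      simpa using Nat.eq_one_of_dvd_one (by simpa using hdd)
    · -- 3 ∣ m, so d ∣ 7 and 7 ∤ e
      rw [hg6, hg63, h3m] at hdd
      norm_num at hdd
      have h3dm : 3 ∣ m := h3m ▸ Nat.gcd_dvd_right 3 m
      have h3h : ¬ 3 ∣ h := by
        intro hc
        have : 3 ∣ Nat.gcd h m := Nat.dvd_gcd hc h3dm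
        omega
      have h7e : ¬ (7 ∣ e) := by
        intro hc
        have hz : ((e : ℕ) : ZMod 7) = 0 := (ZMod.natCast_eq_zero_iff e 7).mpr hc
        have hcast : ((e : ℕ) : ZMod 7) = (2 : ZMod 7) ^ (2 * h) - 2 ^ h + 1 := by
          rw [he]
          push_cast [Nat.cast_sub hle]
          ring
        have hcube : (2 : ZMod 7) ^ 3 = 1 := by decide
        have hpow : (2 : ZMod 7) ^ h = 2 ^ (h % 3) := by
          conv_lhs => rw [← Nat.div_add_mod h 3]
          rw [pow_add, pow_mul, hcube, one_pow, one_mul]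
        have hpow2 : (2 : ZMod 7) ^ (2 * h) = 2 ^ ((2 * h) % 3) := by
          conv_lhs => rw [← Nat.div_add_mod (2 * h) 3]
          rw [pow_add, pow_mul, hcube, one_pow, one_mul]
        have hmod : h % 3 = 1 ∨ h % 3 = 2 := by omega
        rcases hmod with hr | hr
        · have h2r : (2 * h) % 3 = 2 := by omega
          rw [hcast, hpow, hpow2, hr, h2r] at hz
          revert hz; decide
        · have h2r : (2 * h) % 3 = 1 := by omega
          rw [hcast, hpow, hpow2, hr, h2r] at hz
          revert hz; decide
      have hde : d ∣ e := Nat.gcd_dvd_left _ _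
      rcases (Nat.dvd_prime (by norm_num : Nat.Prime 7)).mp hdd with hdv | hdv
      · exact hdv
      · exact absurd (hdv ▸ hde) h7e
  -- coprime (e - 1) (2^m - 1)
  have hcop2 : Nat.Coprime (e - 1) (2 ^ m - 1) := by
    have heq : e - 1 = 2 ^ h * (2 ^ h - 1) := by
      rw [he, h2eq, Nat.mul_sub, mul_one]
      omega
    rw [heq]
    apply Nat.Coprime.mul
    · have hodd : Odd (2 ^ m - 1) := by
        have h2d : 2 ∣ 2 ^ m := dvd_pow_self 2 (by omega)
        have h1m : (1:ℕ) ≤ 2 ^ m := Nat.one_le_two_pow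
        rcases h2d with ⟨k, hk⟩
        exact ⟨k - 1, by omega⟩
      exact Nat.Coprime.pow_left h (Nat.coprime_two_left.mpr hodd)
    · have := aux_dvd_gcd_mersenne (Nat.gcd (2 ^ h - 1) (2 ^ m - 1)) h m
        (Nat.gcd_dvd_left _ _) (Nat.gcd_dvd_right _ _)
      rw [hh] at this
      exact Nat.eq_one_of_dvd_one (by simpa using this)
  exact Nat.Coprime.mul hcop1 hcop2
end

section
/- Let m be even and q = 2^m, and let h be a positive integer such that m/gcd(h,m) is odd. Then gcd(e(e-1), q-1) = 1 for e = 2^h + 1. -/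
/-!
Let `c` divide both `2 ^ h + 1` and `2 ^ m - 1`, and put `x = 2` in `ZMod c`, so `x ^ h = -1` and
`x ^ m = 1`. Then `x ^ (2h) = 1`, so `x ^ gcd(2h, m) = 1`; since `m / gcd(h, m)` is odd,
`gcd(2h, m) = gcd(h, m)` divides `h`, forcing `x ^ h = 1 = -1`, i.e. `2 = 0` in `ZMod c`, and then
`x ^ m = 1` gives `0 = 1`. Hence `c = 1`. The other factor `e - 1 = 2 ^ h` is coprime to the odd
number `2 ^ m - 1`.
-/

lemma Nat.gcd_two_mul_left_of_odd_div_gcd {a b : ℕ} (hodd : Odd (b / Nat.gcd a b)) :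
    Nat.gcd (2 * a) b = Nat.gcd a b := by
  set d := Nat.gcd a b
  obtain ⟨a', ha⟩ : d ∣ a := Nat.gcd_dvd_left a b
  obtain ⟨b', hb⟩ : d ∣ b := Nat.gcd_dvd_right a b
  have hd : 0 < d := Nat.pos_of_ne_zero fun hd0 => by simp [d, hd0] at hodd
  rw [hb, Nat.mul_div_cancel_left _ hd] at hodd
  calc Nat.gcd (2 * a) b = d * Nat.gcd (2 * a') b' := by
        rw [ha, hb, mul_left_comm, Nat.gcd_mul_left]
    _ = d * Nat.gcd a' b' := by rw [hodd.coprime_two_left.gcd_mul_left_cancel]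
    _ = Nat.gcd a b := by rw [← Nat.gcd_mul_left, ← ha, ← hb]

lemma two_eq_zero_of_pow_eq_neg_one_of_pow_eq_one {R : Type*} [Ring R] {x : R} {a b : ℕ}
    (ha : x ^ a = -1) (hb : x ^ b = 1) (hodd : Odd (b / Nat.gcd a b)) : (2 : R) = 0 := by
  have h2a : x ^ (2 * a) = 1 := by rw [pow_mul', ha, neg_one_sq]
  have hgcd : x ^ Nat.gcd a b = 1 := by
    rw [← Nat.gcd_two_mul_left_of_odd_div_gcd hodd]
    exact pow_gcd_eq_one.mpr ⟨h2a, hb⟩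
  have ha' : x ^ a = 1 := by
    obtain ⟨k, hk⟩ := Nat.gcd_dvd_left a b
    rw [hk, pow_mul, hgcd, one_pow]
  calc (2 : R) = 1 - -1 := by rw [sub_neg_eq_add, one_add_one_eq_two]
    _ = 0 := by rw [← ha, ha', sub_self]

lemma Nat.coprime_two_pow_add_one_two_pow_sub_one_s5 {a b : ℕ} (hodd : Odd (b / Nat.gcd a b)) :
    Nat.Coprime (2 ^ a + 1) (2 ^ b - 1) := by
  set c := Nat.gcd (2 ^ a + 1) (2 ^ b - 1)
  have hb : b ≠ 0 := by rintro rfl; simp at hodd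
  have hcast : ∀ n : ℕ, c ∣ n → (n : ZMod c) = 0 := fun n hn => (ZMod.natCast_eq_zero_iff n c).mpr hn
  have ha : (2 : ZMod c) ^ a = -1 := by
    have := hcast _ (Nat.gcd_dvd_left _ _)
    push_cast at this
    exact eq_neg_of_add_eq_zero_left this
  have hb1 : (2 : ZMod c) ^ b = 1 := by
    have := hcast _ (Nat.gcd_dvd_right _ _)
    rw [Nat.cast_sub Nat.one_le_two_pow] at this
    push_cast at this
    exact sub_eq_zero.mp this
  have h01 : ((1 : ℕ) : ZMod c) = 0 := by
    rw [Nat.cast_one, ← hb1, two_eq_zero_of_pow_eq_neg_one_of_pow_eq_one ha hb1 hodd, zero_pow hb]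
  exact Nat.dvd_one.mp ((ZMod.natCast_eq_zero_iff 1 c).mp h01)

lemma Nat.coprime_two_pow_two_pow_sub_one {b : ℕ} (a : ℕ) (hb : b ≠ 0) :
    Nat.Coprime (2 ^ a) (2 ^ b - 1) :=
  Nat.Coprime.pow_left a (Nat.Even.sub_odd Nat.one_le_two_pow
    (Nat.even_pow.mpr ⟨even_two, hb⟩) odd_one).coprime_two_left

theorem stmt_5_general (m h : ℕ)
    (hodd : Odd (m / Nat.gcd h m)) :
    Nat.gcd ((2 ^ h + 1) * ((2 ^ h + 1) - 1)) (2 ^ m - 1) = 1 := by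
  have hm : m ≠ 0 := by rintro rfl; simp at hodd
  rw [Nat.add_sub_cancel]
  exact (Nat.coprime_two_pow_add_one_two_pow_sub_one_s5 hodd).mul_left
    (Nat.coprime_two_pow_two_pow_sub_one h hm)

theorem stmt_5 (m h : ℕ) (hm : Even m) (hpos : 0 < h)
    (hodd : Odd (m / Nat.gcd h m)) :
    Nat.gcd ((2 ^ h + 1) * ((2 ^ h + 1) - 1)) (2 ^ m - 1) = 1 :=
  stmt_5_general m h hodd
end

section
/- Let q = 2^m with m ≥ 3, and let f(x) = x^d be an o-monomial over GF(q) and a in GF(q)*. Then for any pairwise distinct u1, u2, u3 in GF(q), the number of pairs (b,c) in GF(q)* × GF(q) with {u1,u2,u3} ⊆ {a x^d + bx + c : x in GF(q)} equals q(q-4)/8. -/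
/-- A function is 2-to-1 if every element of its image has exactly two preimages. -/
def TwoToOne {F : Type*} (g : F → F) : Prop :=
  ∀ y : F, (∃ x : F, g x = y) → Set.ncard {x : F | g x = y} = 2

/-!
Count the solutions `((b, c), x)` of `a * x i ^ d + b * x i + c = u i` (`i = 0, 1, 2`).
Since `x ↦ a x^d + b x` is 2-to-1 for `b ≠ 0`, every admissible `(b, c)` carries 8 solutions,
and `b = 0` carries `q` more. Forgetting `(b, c)`, the solutions are the injective triples `x`
for which the points `(x i, u i - a x i ^ d)` are collinear, i.e. `a D(x) = L(x)` with
`D(x) = det(1, x i, x i ^ d)` and `L(x) = det(1, x i, u i)`. No three points of the graph of an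
o-monomial are collinear, so `D(x) ≠ 0`; as `D` and `L` are homogeneous of degrees `d + 1` and
`1` and `t ↦ t ^ d` is bijective, each orbit `{t • x | t ≠ 0}` on which `L ≠ 0` holds exactly one
solution. The injective triples with `L = 0` are the `β • u + α` with `β ≠ 0`, hence there are
`(q (q - 1) (q - 2) - q (q - 1)) / (q - 1) = q (q - 3)` solutions and `8 N = q (q - 4)`.
-/

open Finset Function

section Collinear

variable {K : Type*} [Field K]

def triangleDet (x y : Fin 3 → K) : K :=
  (x 1 - x 0) * (y 2 - y 0) - (x 2 - x 0) * (y 1 - y 0)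

theorem triangleDet_eq_zero_iff {x : Fin 3 → K} (hx : x 0 ≠ x 1) (y : Fin 3 → K) :
    triangleDet x y = 0 ↔ ∃ b c, ∀ i, y i = b * x i + c := by
  have hx' : x 1 - x 0 ≠ 0 := sub_ne_zero.2 hx.symm
  constructor
  · intro h
    refine ⟨(y 1 - y 0) / (x 1 - x 0), y 0 - (y 1 - y 0) / (x 1 - x 0) * x 0, fun i => ?_⟩
    fin_cases i <;> simp only [Fin.zero_eta, Fin.mk_one, Fin.reduceFinMk]
    · ring
    · field_simp
      ring
    · rw [triangleDet] at h
      field_simp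
      linear_combination h
  · rintro ⟨b, c, h⟩
    simp only [triangleDet, h]
    ring

theorem eq_of_affine_eq_affine {x : Fin 3 → K} (hx : x 0 ≠ x 1) {b c b' c' : K}
    (h : ∀ i, b * x i + c = b' * x i + c') : b = b' ∧ c = c' := by
  have hb : b = b' := by
    have h' : (b - b') * (x 1 - x 0) = 0 := by linear_combination h 1 - h 0
    simpa [sub_eq_zero, hx.symm] using h'
  subst hb
  exact ⟨rfl, add_left_cancel (h 0)⟩

theorem triangleDet_smul_left (t : K) (x y : Fin 3 → K) :
    triangleDet (t • x) y = t * triangleDet x y := by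
  simp only [triangleDet, Pi.smul_apply, smul_eq_mul]
  ring

theorem triangleDet_smul_right (t : K) (x y : Fin 3 → K) :
    triangleDet x (t • y) = t * triangleDet x y := by
  simp only [triangleDet, Pi.smul_apply, smul_eq_mul]
  ring

theorem triangleDet_sub_right (x y z : Fin 3 → K) :
    triangleDet x (y - z) = triangleDet x y - triangleDet x z := by
  simp only [triangleDet, Pi.sub_apply]
  ring

theorem triangleDet_swap (x y : Fin 3 → K) : triangleDet x y = -triangleDet y x := by
  simp only [triangleDet]
  ring

end Collinear

theorem TwoToOne.comp_injective {α : Type*} {g e : α → α} (hg : TwoToOne g)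
    (he : Injective e) : TwoToOne (e ∘ g) := by
  rintro _ ⟨x, rfl⟩
  simpa [he.eq_iff] using hg (g x) ⟨x, rfl⟩

theorem card_filter_injective {α β : Type*} [Fintype α] [DecidableEq α] [Fintype β]
    [DecidableEq β] :
    #(univ.filter fun f : α → β => Injective f) =
      (Fintype.card β).descFactorial (Fintype.card α) := by
  rw [← Fintype.card_subtype, Fintype.card_congr (Equiv.subtypeInjectiveEquivEmbedding α β),
    Fintype.card_embedding_eq]

theorem pow_injective_of_coprime {F : Type*} [Field F] [Fintype F] {d : ℕ} (hd0 : d ≠ 0)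
    (hd : (Fintype.card F - 1).Coprime d) : Injective fun x : F => x ^ d := by
  have hunits : (Nat.card Fˣ).Coprime d := by
    rwa [Nat.card_units, Nat.card_eq_fintype_card]
  intro x y hxy
  simp only at hxy
  rcases eq_or_ne x 0 with rfl | hx
  · rw [zero_pow hd0, eq_comm, pow_eq_zero_iff hd0] at hxy
    exact hxy.symm
  rcases eq_or_ne y 0 with rfl | hy
  · rwa [zero_pow hd0, pow_eq_zero_iff hd0] at hxy
  have := (powCoprime hunits).injective (a₁ := Units.mk0 x hx) (a₂ := Units.mk0 y hy)
    (Units.ext (by simpa using hxy))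
  simpa using congrArg Units.val this

section OMonomial

variable {F : Type*} [Field F] [Fintype F] {d : ℕ}

theorem triangleDet_pow_ne_zero (hpow : Injective fun x : F => x ^ d)
    (hf : ∀ b : F, b ≠ 0 → TwoToOne fun x => x ^ d + b * x)
    {x : Fin 3 → F} (hx : Injective x) : triangleDet x (x ^ d) ≠ 0 := by
  intro h0
  obtain ⟨b, c, hbc⟩ := (triangleDet_eq_zero_iff (hx.ne (by decide)) _).1 h0
  simp only [Pi.pow_apply] at hbc
  rcases eq_or_ne b 0 with rfl | hb
  · exact hx.ne (by decide : (0 : Fin 3) ≠ 1) (hpow (by simp [hbc]))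
  · have hsub : Set.range x ⊆ {z | z ^ d + -b * z = c} := by
      rintro _ ⟨i, rfl⟩
      simp [hbc]
    have := Set.ncard_le_ncard hsub (Set.toFinite _)
    rw [Set.ncard_range_of_injective hx, hf (-b) (neg_ne_zero.2 hb) c ⟨x 0, by simp [hbc]⟩] at this
    simp at this

variable [DecidableEq F]

theorem card_filter_affine_pow_eq_two (hf : ∀ b : F, b ≠ 0 → TwoToOne fun x => x ^ d + b * x)
    {a b : F} (ha : a ≠ 0) (hb : b ≠ 0) (c : F) {y : F}
    (hy : ∃ x, y = a * x ^ d + b * x + c) :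
    #(univ.filter fun x => y = a * x ^ d + b * x + c) = 2 := by
  have hg : TwoToOne fun x => a * x ^ d + b * x + c := by
    have he : Injective fun z : F => a * z + c :=
      (add_left_injective c).comp (mul_right_injective₀ ha)
    convert (hf (b / a) (div_ne_zero hb ha)).comp_injective he using 2 with x
    simp only [comp_apply]
    field_simp
  obtain ⟨x, rfl⟩ := hy
  rw [← hg _ ⟨x, rfl⟩, Set.ncard_eq_toFinset_card', Set.toFinset_ofPred]
  simp only [eq_comm]

def preimageTriples (a : F) (d : ℕ) (u : Fin 3 → F) : Finset ((F × F) × (Fin 3 → F)) :=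
  univ.filter fun q => ∀ i, u i = a * q.2 i ^ d + q.1.1 * q.2 i + q.1.2

theorem card_preimageTriples_filter_ne_zero
    (hf : ∀ b : F, b ≠ 0 → TwoToOne fun x => x ^ d + b * x) {a : F} (ha : a ≠ 0)
    (u : Fin 3 → F) :
    #((preimageTriples a d u).filter fun q => q.1.1 ≠ 0) =
      8 * Set.ncard {p : F × F | p.1 ≠ 0 ∧
        Set.range u ⊆ {y : F | ∃ x : F, y = a * x ^ d + p.1 * x + p.2}} := by
  have hP : {p : F × F | p.1 ≠ 0 ∧
      Set.range u ⊆ {y : F | ∃ x : F, y = a * x ^ d + p.1 * x + p.2}} =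
      ↑(univ.filter fun p : F × F => p.1 ≠ 0 ∧ ∀ i, ∃ x, u i = a * x ^ d + p.1 * x + p.2) := by
    ext p
    simp [Set.range_subset_iff]
  rw [hP, Set.ncard_coe_finset, card_eq_sum_card_fiberwise (f := Prod.fst), mul_comm,
    ← smul_eq_mul, ← sum_const]
  · refine sum_congr rfl fun p hp => ?_
    rw [mem_filter] at hp
    calc _ = #(Fintype.piFinset fun i => univ.filter fun x => u i = a * x ^ d + p.1 * x + p.2) := by
          refine card_nbij' Prod.snd (Prod.mk p) ?_ ?_ ?_ ?_
          · intro q hq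
            simp_all [preimageTriples]
          · intro x hx
            simp_all [preimageTriples]
          · intro q hq
            simp only [coe_filter, preimageTriples, mem_filter, Set.mem_ofPred_eq] at hq
            exact Prod.ext hq.2.symm rfl
          · intro x _
            rfl
      _ = 8 := by
          rw [Fintype.card_piFinset]
          simp [card_filter_affine_pow_eq_two hf ha hp.2.1 _ (hp.2.2 _)]
  · intro q hq
    simp only [preimageTriples, coe_filter, mem_filter, mem_univ, true_and,
      Set.mem_ofPred_eq] at hq ⊢
    exact ⟨hq.2, fun i => ⟨q.2 i, hq.1 i⟩⟩

theorem card_preimageTriples_filter_eq_zero (hpow : Bijective fun x : F => x ^ d) {a : F}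
    (ha : a ≠ 0) (u : Fin 3 → F) :
    #((preimageTriples a d u).filter fun q => q.1.1 = 0) = Fintype.card F := by
  rw [← card_univ]
  refine card_nbij (fun q => q.1.2) (fun _ _ => mem_univ _) ?_ ?_
  · rintro ⟨⟨b, c⟩, x⟩ hq ⟨⟨b', c'⟩, x'⟩ hq' (rfl : c = c')
    simp only [preimageTriples, coe_filter, mem_filter, mem_univ, true_and,
      Set.mem_ofPred_eq] at hq hq'
    obtain ⟨hx, rfl⟩ := hq
    obtain ⟨hx', rfl⟩ := hq'
    have : x = x' := funext fun i => hpow.1 <| mul_left_cancel₀ ha <| by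
      simpa using (hx i).symm.trans (hx' i)
    rw [this]
  · intro c _
    choose r hr using hpow.2
    replace hr (y : F) : r y ^ d = y := hr y
    refine ⟨((0, c), fun i => r ((u i - c) / a)), ?_, rfl⟩
    simp only [preimageTriples, coe_filter, mem_filter, mem_univ, true_and, Set.mem_ofPred_eq,
      and_true]
    intro i
    rw [hr, mul_div_cancel₀ _ ha]
    ring

theorem card_preimageTriples {a : F} (u : Fin 3 → F) (hu : Injective u) :
    #(preimageTriples a d u) =
      #(univ.filter fun x : Fin 3 → F => Injective x ∧ triangleDet x (u - a • x ^ d) = 0) := by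
  have hsub (x : Fin 3 → F) (b c : F) :
      (∀ i, u i = a * x i ^ d + b * x i + c) ↔ ∀ i, (u - a • x ^ d) i = b * x i + c := by
    refine forall_congr' fun i => ?_
    simp only [Pi.sub_apply, Pi.smul_apply, Pi.pow_apply, smul_eq_mul]
    constructor <;> intro h <;> linear_combination h
  refine card_nbij Prod.snd ?_ ?_ ?_
  · rintro ⟨⟨b, c⟩, x⟩ hq
    simp only [preimageTriples, coe_filter, mem_univ, true_and,
      Set.mem_ofPred_eq] at hq ⊢
    have hx : Injective x := fun i j hij => hu (by rw [hq i, hq j, hij])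
    exact ⟨hx, (triangleDet_eq_zero_iff (hx.ne (by decide)) _).2 ⟨b, c, (hsub x b c).1 hq⟩⟩
  · rintro ⟨⟨b, c⟩, x⟩ hq ⟨⟨b', c'⟩, x'⟩ hq' (rfl : x = x')
    simp only [preimageTriples, coe_filter, mem_univ, true_and,
      Set.mem_ofPred_eq] at hq hq'
    have hx : Injective x := fun i j hij => hu (by rw [hq i, hq j, hij])
    have h (i : Fin 3) : b * x i + c = b' * x i + c' := by linear_combination hq' i - hq i
    obtain ⟨rfl, rfl⟩ := eq_of_affine_eq_affine (hx.ne (by decide)) h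
    rfl
  · intro x hx
    simp only [coe_filter, mem_univ, true_and, Set.mem_ofPred_eq] at hx
    obtain ⟨b, c, hbc⟩ := (triangleDet_eq_zero_iff (hx.1.ne (by decide)) _).1 hx.2
    refine ⟨((b, c), x), ?_, rfl⟩
    simp only [preimageTriples, coe_filter, mem_univ, true_and, Set.mem_ofPred_eq]
    exact (hsub x b c).2 hbc

theorem card_injective_triangleDet_eq_zero {u : Fin 3 → F} (hu : Injective u) :
    #(univ.filter fun x : Fin 3 → F => Injective x ∧ triangleDet x u = 0) =
      (Fintype.card F - 1) * Fintype.card F := by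
  rw [← card_univ, ← card_erase_of_mem (mem_univ (0 : F)), ← filter_ne', ← card_product]
  have hu01 : u 0 ≠ u 1 := hu.ne (by decide)
  have hdet (x : Fin 3 → F) : triangleDet x u = 0 ↔ ∃ b c, ∀ i, x i = b * u i + c := by
    rw [triangleDet_swap, neg_eq_zero, triangleDet_eq_zero_iff hu01]
  symm
  refine card_nbij (fun p i => p.1 * u i + p.2) ?_ ?_ ?_
  · rintro ⟨b, c⟩ hp
    simp only [coe_product, coe_filter, mem_univ, true_and, Set.mem_prod,
      Set.mem_ofPred_eq] at hp ⊢
    refine ⟨fun i j hij => hu (mul_left_cancel₀ hp.1 (add_right_cancel hij)), ?_⟩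
    exact (hdet _).2 ⟨b, c, fun i => rfl⟩
  · rintro ⟨b, c⟩ _ ⟨b', c'⟩ _ h
    obtain ⟨rfl, rfl⟩ := eq_of_affine_eq_affine hu01 (congrFun h)
    rfl
  · intro x hx
    simp only [coe_filter, mem_univ, true_and, Set.mem_ofPred_eq] at hx
    obtain ⟨b, c, hbc⟩ := (hdet x).1 hx.2
    refine ⟨(b, c), ?_, funext fun i => (hbc i).symm⟩
    simp only [coe_product, coe_filter, coe_univ, mem_univ, true_and, Set.mem_prod,
      Set.mem_ofPred_eq, Set.mem_univ, and_true]
    rintro rfl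
    exact hx.1.ne (by decide : (0 : Fin 3) ≠ 1) (by simp [hbc])

theorem card_collinear_mul_card_sub_one (hpow : Bijective fun x : F => x ^ d)
    (hf : ∀ b : F, b ≠ 0 → TwoToOne fun x => x ^ d + b * x) {a : F} (ha : a ≠ 0)
    (u : Fin 3 → F) :
    #(univ.filter fun x : Fin 3 → F => Injective x ∧ triangleDet x (u - a • x ^ d) = 0) *
        (Fintype.card F - 1) =
      #(univ.filter fun y : Fin 3 → F => Injective y ∧ triangleDet y u ≠ 0) := by
  have hd0 : d ≠ 0 := by
    rintro rfl
    exact zero_ne_one (hpow.1 (by simp))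
  have hL (x : Fin 3 → F) :
      triangleDet x (u - a • x ^ d) = triangleDet x u - a * triangleDet x (x ^ d) := by
    rw [triangleDet_sub_right, triangleDet_smul_right]
  have hD (t : F) (x : Fin 3 → F) :
      triangleDet (t • x) ((t • x) ^ d) = t ^ (d + 1) * triangleDet x (x ^ d) := by
    rw [smul_pow, triangleDet_smul_left, triangleDet_smul_right]
    ring
  have hsmul {t : F} (ht : t ≠ 0) {x : Fin 3 → F} (hx : Injective x) : Injective (t • x) :=
    fun i j hij => hx (mul_left_cancel₀ ht hij)
  -- along the line `t • x` the ratio of the two determinants recovers `t ^ d`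
  have hratio {x : Fin 3 → F} (hx : triangleDet x (u - a • x ^ d) = 0) (t : F) :
      t ^ d * triangleDet (t • x) u = a * triangleDet (t • x) ((t • x) ^ d) := by
    rw [hL, sub_eq_zero] at hx
    rw [triangleDet_smul_left, hD, hx]
    ring
  have hLne {x : Fin 3 → F} (hx : Injective x) (hxS : triangleDet x (u - a • x ^ d) = 0)
      {t : F} (ht : t ≠ 0) : triangleDet (t • x) u ≠ 0 := by
    intro h0
    have := hratio hxS t
    rw [h0, mul_zero, hD, eq_comm] at this
    simp [ha, ht, triangleDet_pow_ne_zero hpow.1 hf hx] at this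
  rw [← card_univ, ← card_erase_of_mem (mem_univ (0 : F)), ← filter_ne', ← card_product]
  refine card_nbij (fun p => p.2 • p.1) ?_ ?_ ?_
  · rintro ⟨x, t⟩ hp
    simp only [coe_product, coe_filter, mem_univ, true_and, Set.mem_prod,
      Set.mem_ofPred_eq] at hp ⊢
    obtain ⟨⟨hx, hxS⟩, ht⟩ := hp
    exact ⟨hsmul ht hx, hLne hx hxS ht⟩
  · rintro ⟨x, t⟩ hp ⟨x', t'⟩ hp' (h : t • x = t' • x')
    simp only [coe_product, coe_filter, mem_univ, true_and, Set.mem_prod,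
      Set.mem_ofPred_eq] at hp hp'
    obtain ⟨⟨hx, hxS⟩, ht⟩ := hp
    obtain ⟨⟨-, hx'S⟩, -⟩ := hp'
    have htt' : t = t' := hpow.1 <| mul_right_cancel₀ (hLne hx hxS ht) <| by
      rw [hratio hxS, h, ← hratio hx'S]
    subst htt'
    rw [smul_right_injective _ ht h]
  · intro y hy
    simp only [coe_filter, mem_univ, true_and, Set.mem_ofPred_eq] at hy
    obtain ⟨s, hs : s ^ d = _⟩ := hpow.2 (triangleDet y u / (a * triangleDet y (y ^ d)))
    have hDy : triangleDet y (y ^ d) ≠ 0 := triangleDet_pow_ne_zero hpow.1 hf hy.1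
    have hs0 : s ≠ 0 := by
      rintro rfl
      rw [zero_pow hd0, eq_comm] at hs
      exact div_ne_zero hy.2 (mul_ne_zero ha hDy) hs
    refine ⟨(s • y, s⁻¹), ?_, inv_smul_smul₀ hs0 y⟩
    simp only [coe_product, coe_filter, mem_univ, true_and, Set.mem_prod, Set.mem_ofPred_eq]
    refine ⟨⟨hsmul hs0 hy.1, ?_⟩, inv_ne_zero hs0⟩
    rw [hL, hD, triangleDet_smul_left, pow_succ, hs]
    field_simp
    ring

theorem card_injective_triangleDet_ne_zero {u : Fin 3 → F} (hu : Injective u) :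
    #(univ.filter fun y : Fin 3 → F => Injective y ∧ triangleDet y u ≠ 0) +
        (Fintype.card F - 1) * Fintype.card F =
      (Fintype.card F).descFactorial 3 := by
  have hinj := card_filter_injective (α := Fin 3) (β := F)
  rw [Fintype.card_fin] at hinj
  rw [← card_injective_triangleDet_eq_zero hu, ← hinj,
    ← card_filter_add_card_filter_not (s := univ.filter fun y : Fin 3 → F => Injective y)
      (p := fun y => triangleDet y u ≠ 0)]
  simp only [filter_filter, not_not]

theorem card_collinear (hpow : Bijective fun x : F => x ^ d)
    (hf : ∀ b : F, b ≠ 0 → TwoToOne fun x => x ^ d + b * x) {a : F} (ha : a ≠ 0)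
    {u : Fin 3 → F} (hu : Injective u) :
    #(univ.filter fun x : Fin 3 → F => Injective x ∧ triangleDet x (u - a • x ^ d) = 0) =
      Fintype.card F * (Fintype.card F - 3) := by
  have horbit := card_collinear_mul_card_sub_one hpow hf ha u
  have hsplit := card_injective_triangleDet_ne_zero hu
  obtain ⟨k, hk⟩ : ∃ k, Fintype.card F = k + 3 :=
    Nat.exists_eq_add_of_le' (by simpa using Fintype.card_le_of_injective u hu)
  rw [hk] at horbit hsplit ⊢
  simp only [Nat.descFactorial_succ, Nat.descFactorial_zero, show k + 3 - 1 = k + 2 by omega,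
    show k + 3 - 2 = k + 1 by omega, add_tsub_cancel_right, Nat.sub_zero] at horbit hsplit ⊢
  refine Nat.eq_of_mul_eq_mul_right (by omega : 0 < k + 2) ?_
  nlinarith

end OMonomial

theorem stmt_12_general {F : Type*} [Field F] [Fintype F] (m d : ℕ)
    (hq : Fintype.card F = 2 ^ m)
    (hd : Nat.gcd d (2 ^ m - 1) = 1)
    (h2 : ∀ b : F, b ≠ 0 → TwoToOne (fun x => x ^ d + b * x))
    (a : F) (ha : a ≠ 0)
    (u₁ u₂ u₃ : F) (h12 : u₁ ≠ u₂) (h13 : u₁ ≠ u₃) (h23 : u₂ ≠ u₃) :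
    Set.ncard {p : F × F | p.1 ≠ 0 ∧
        ({u₁, u₂, u₃} : Set F) ⊆ {y : F | ∃ x : F, y = a * x ^ d + p.1 * x + p.2}} =
      2 ^ m * (2 ^ m - 4) / 8 := by
  classical
  set u : Fin 3 → F := ![u₁, u₂, u₃]
  have hu : Injective u := by
    intro i j
    fin_cases i <;> fin_cases j <;> simp [u, h12, h13, h23, h12.symm, h13.symm, h23.symm]
  have hq3 : 3 ≤ Fintype.card F := by simpa using Fintype.card_le_of_injective u hu
  have hpow : Bijective fun x : F => x ^ d := by
    refine (pow_injective_of_coprime ?_ ?_).bijective_of_finite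
    · rintro rfl
      rw [Nat.gcd_zero_left] at hd
      omega
    · rwa [hq, Nat.coprime_comm]
  have hcount := card_filter_add_card_filter_not (s := preimageTriples a d u) (fun q => q.1.1 ≠ 0)
  rw [card_preimageTriples_filter_ne_zero h2 ha u, card_preimageTriples u hu,
    card_collinear hpow h2 ha hu] at hcount
  simp only [not_not] at hcount
  rw [card_preimageTriples_filter_eq_zero hpow ha u] at hcount
  have hrange : Set.range u = {u₁, u₂, u₃} := by
    simp only [u, Matrix.range_cons, Matrix.range_empty, Set.union_empty, Set.singleton_union]
  rw [hrange] at hcount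
  have hq4 : 4 ≤ Fintype.card F := by
    rcases hq3.eq_or_lt with h | h
    · rw [← h] at hcount
      omega
    · omega
  rw [← hq, eq_comm]
  apply Nat.div_eq_of_eq_mul_left (by norm_num)
  zify [hq3, hq4] at hcount ⊢
  linear_combination -hcount

theorem stmt_12 {F : Type*} [Field F] [Fintype F] (m d : ℕ) (hm : 3 ≤ m)
    (hq : Fintype.card F = 2 ^ m)
    (hd : Nat.gcd d (2 ^ m - 1) = 1)
    (h2 : ∀ b : F, b ≠ 0 → TwoToOne (fun x => x ^ d + b * x))
    (a : F) (ha : a ≠ 0)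
    (u₁ u₂ u₃ : F) (h12 : u₁ ≠ u₂) (h13 : u₁ ≠ u₃) (h23 : u₂ ≠ u₃) :
    Set.ncard {p : F × F | p.1 ≠ 0 ∧
        ({u₁, u₂, u₃} : Set F) ⊆ {y : F | ∃ x : F, y = a * x ^ d + p.1 * x + p.2}} =
      2 ^ m * (2 ^ m - 4) / 8 :=
  stmt_12_general m d hq hd h2 a ha u₁ u₂ u₃ h12 h13 h23
end

section
/- Let q = 2^m with m ≥ 3, and let f be an o-polynomial over GF(q). For any two distinct u1, u2 in GF(q), the number of pairs (b,c) in GF(q)* × GF(q) such that {u1, u2} ⊆ {f(x)+bx+c : x in GF(q)} equals q(q-2)/4. -/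
/-!
Double counting. A pair `x ≠ y` determines exactly one line `(b, c)` with
`f x + b * x + c = u₁` and `f y + b * y + c = u₂`, and `b ≠ 0` unless `f x - f y = u₁ - u₂`.
Since `f` is a permutation, exactly `q` of the `q² - q` pairs `x ≠ y` have
`f x - f y = u₁ - u₂`, and since every `x ↦ f x + b * x` with `b ≠ 0` is 2-to-1, each admissible
`(b, c)` arises from exactly `2 · 2` of the remaining ones.
-/

open Finset

theorem TwoToOne.card_filter_eq_two {F : Type*} [Fintype F] [DecidableEq F] {g : F → F}
    (hg : TwoToOne g) {y : F} (hy : ∃ x, g x = y) : #{x | g x = y} = 2 := by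
  simpa [← Set.ncard_coe_finset] using hg y hy

theorem card_filter_sub_eq_of_bijective {G : Type*} [AddGroup G] [Fintype G] [DecidableEq G]
    {f : G → G} (hf : Function.Bijective f) (d : G) :
    #{p : G × G | f p.1 - f p.2 = d} = Fintype.card G := by
  let e := Equiv.ofBijective f hf
  refine card_nbij' Prod.snd (fun y => (e.symm (d + f y), y)) (by simp)
    (fun y _ => by simp [e, Equiv.ofBijective_apply_symm_apply]) ?_ fun _ _ => rfl
  rintro ⟨x, y⟩ hxy
  simp only [coe_filter, mem_univ, true_and, Set.mem_ofPred_eq] at hxy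
  simp [e, ← hxy]

section Secants

variable {F : Type*} [Field F]

/-- The unique `(b, c)` with `f x + b * x + c = u₁` and `f y + b * y + c = u₂`, for `p = (x, y)`
with `x ≠ y`. -/
def lineThrough (f : F → F) (u₁ u₂ : F) (p : F × F) : F × F :=
  let b := (u₁ - u₂ - (f p.1 - f p.2)) / (p.1 - p.2)
  (b, u₁ - f p.1 - b * p.1)

theorem lineThrough_eq_iff {f : F → F} {u₁ u₂ x y b c : F} (hxy : x ≠ y) :
    lineThrough f u₁ u₂ (x, y) = (b, c) ↔ f x + b * x + c = u₁ ∧ f y + b * y + c = u₂ := by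
  have hxy' : x - y ≠ 0 := sub_ne_zero.mpr hxy
  simp only [lineThrough, Prod.mk.injEq]
  constructor
  · rintro ⟨rfl, rfl⟩
    refine ⟨by ring, ?_⟩
    field_simp
    ring
  · rintro ⟨h₁, h₂⟩
    have hb : (u₁ - u₂ - (f x - f y)) / (x - y) = b := by
      rw [div_eq_iff hxy']
      linear_combination h₂ - h₁
    exact ⟨hb, by rw [hb]; linear_combination -h₁⟩

theorem lineThrough_fst_ne_zero {f : F → F} {u₁ u₂ x y : F} (hxy : x ≠ y)
    (hd : f x - f y ≠ u₁ - u₂) : (lineThrough f u₁ u₂ (x, y)).1 ≠ 0 :=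
  div_ne_zero (sub_ne_zero.mpr hd.symm) (sub_ne_zero.mpr hxy)

variable [Fintype F] [DecidableEq F]

/-- Pairs `x ≠ y` through which passes a line `(b, c)` with `b ≠ 0`. -/
def secantPairs (f : F → F) (u₁ u₂ : F) : Finset (F × F) :=
  {p ∈ (univ : Finset F).offDiag | f p.1 - f p.2 ≠ u₁ - u₂}

open Classical in
def secants (f : F → F) (u₁ u₂ : F) : Finset (F × F) :=
  {bc | bc.1 ≠ 0 ∧ (∃ x, f x + bc.1 * x + bc.2 = u₁) ∧ ∃ x, f x + bc.1 * x + bc.2 = u₂}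

theorem card_secantPairs {f : F → F} (hf : Function.Bijective f) {u₁ u₂ : F} (h12 : u₁ ≠ u₂) :
    #(secantPairs f u₁ u₂) = Fintype.card F * Fintype.card F - Fintype.card F - Fintype.card F := by
  have hdiag : {p ∈ (univ : Finset F).offDiag | f p.1 - f p.2 = u₁ - u₂} =
      ({p : F × F | f p.1 - f p.2 = u₁ - u₂} : Finset (F × F)) := by
    ext ⟨x, y⟩
    simp only [mem_filter, mem_offDiag, mem_univ, true_and, and_iff_right_iff_imp]
    rintro hd rfl
    exact h12 (sub_eq_zero.mp (by simpa using hd.symm))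
  have hsplit := card_filter_add_card_filter_not (s := univ.offDiag)
    (p := fun p : F × F => f p.1 - f p.2 = u₁ - u₂)
  rw [hdiag, card_filter_sub_eq_of_bijective hf, offDiag_card, card_univ] at hsplit
  rw [secantPairs, ← hsplit]
  simp only [ne_eq, Nat.add_sub_cancel_left]

theorem card_fiber_lineThrough {f : F → F}
    (h2 : ∀ b : F, b ≠ 0 → TwoToOne (fun x => f x + b * x)) {u₁ u₂ : F} (h12 : u₁ ≠ u₂)
    {bc : F × F} (hbc : bc ∈ secants f u₁ u₂) :
    #{p ∈ secantPairs f u₁ u₂ | lineThrough f u₁ u₂ p = bc} = 4 := by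
  obtain ⟨b, c⟩ := bc
  simp only [secants, mem_filter, mem_univ, true_and] at hbc
  obtain ⟨hb, ⟨x₁, hx₁⟩, ⟨x₂, hx₂⟩⟩ := hbc
  have hfibre : {p ∈ secantPairs f u₁ u₂ | lineThrough f u₁ u₂ p = (b, c)} =
      ({x | f x + b * x = u₁ - c} : Finset F) ×ˢ ({x | f x + b * x = u₂ - c} : Finset F) := by
    ext ⟨x, y⟩
    simp only [secantPairs, mem_filter, mem_offDiag, mem_univ, true_and, mem_product,
      eq_sub_iff_add_eq]
    constructor
    · rintro ⟨⟨hxy, -⟩, hline⟩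
      exact (lineThrough_eq_iff hxy).mp hline
    · rintro ⟨h₁, h₂⟩
      have hxy : x ≠ y := by
        rintro rfl
        exact h12 (h₁.symm.trans h₂)
      refine ⟨⟨hxy, fun hd => ?_⟩, (lineThrough_eq_iff hxy).mpr ⟨h₁, h₂⟩⟩
      have : b * (x - y) = 0 := by linear_combination h₁ - h₂ - hd
      exact mul_ne_zero hb (sub_ne_zero.mpr hxy) this
  rw [hfibre, card_product, (h2 b hb).card_filter_eq_two ⟨x₁, by linear_combination hx₁⟩,
    (h2 b hb).card_filter_eq_two ⟨x₂, by linear_combination hx₂⟩]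

theorem card_secantPairs_eq_four_mul {f : F → F}
    (h2 : ∀ b : F, b ≠ 0 → TwoToOne (fun x => f x + b * x)) {u₁ u₂ : F} (h12 : u₁ ≠ u₂) :
    #(secantPairs f u₁ u₂) = 4 * #(secants f u₁ u₂) := by
  have hmaps : ∀ p ∈ secantPairs f u₁ u₂, lineThrough f u₁ u₂ p ∈ secants f u₁ u₂ := by
    rintro ⟨x, y⟩ hp
    simp only [secantPairs, mem_filter, mem_offDiag, mem_univ, true_and] at hp
    obtain ⟨hxy, hd⟩ := hp
    have hline := (lineThrough_eq_iff (f := f) (u₁ := u₁) (u₂ := u₂) hxy).mp rfl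
    simp only [secants, mem_filter, mem_univ, true_and]
    exact ⟨lineThrough_fst_ne_zero hxy hd, ⟨x, hline.1⟩, ⟨y, hline.2⟩⟩
  rw [card_eq_sum_card_fiberwise hmaps, sum_congr rfl fun _ => card_fiber_lineThrough h2 h12,
    sum_const, smul_eq_mul, mul_comm]

end Secants

theorem stmt_13_general {F : Type*} [Field F] [Fintype F] (m : ℕ)
    (hq : Fintype.card F = 2 ^ m) (f : F → F)
    (hperm : Function.Bijective f)
    (h2 : ∀ b : F, b ≠ 0 → TwoToOne (fun x => f x + b * x))
    (u₁ u₂ : F) (h12 : u₁ ≠ u₂) :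
    Set.ncard {p : F × F | p.1 ≠ 0 ∧
        ({u₁, u₂} : Set F) ⊆ {y : F | ∃ x : F, y = f x + p.1 * x + p.2}} =
      2 ^ m * (2 ^ m - 2) / 4 := by
  classical
  have hset : {p : F × F | p.1 ≠ 0 ∧
      ({u₁, u₂} : Set F) ⊆ {y : F | ∃ x : F, y = f x + p.1 * x + p.2}} = secants f u₁ u₂ := by
    ext p
    simp [secants, Set.insert_subset_iff, eq_comm]
  have hcount := (card_secantPairs_eq_four_mul h2 h12).symm.trans (card_secantPairs hperm h12)
  rw [hset, Set.ncard_coe_finset, ← hq, Nat.mul_sub, mul_two, ← Nat.sub_sub, ← hcount,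
    Nat.mul_div_cancel_left _ four_pos]

theorem stmt_13 {F : Type*} [Field F] [Fintype F] (m : ℕ) (hm : 3 ≤ m)
    (hq : Fintype.card F = 2 ^ m) (f : F → F)
    (hperm : Function.Bijective f) (hf0 : f 0 = 0)
    (h2 : ∀ b : F, b ≠ 0 → TwoToOne (fun x => f x + b * x))
    (u₁ u₂ : F) (h12 : u₁ ≠ u₂) :
    Set.ncard {p : F × F | p.1 ≠ 0 ∧
        ({u₁, u₂} : Set F) ⊆ {y : F | ∃ x : F, y = f x + p.1 * x + p.2}} =
      2 ^ m * (2 ^ m - 2) / 4 :=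
  stmt_13_general m hq f hperm h2 u₁ u₂ h12
end

section
/- Let q = 2^m with m ≥ 3, gcd(h,m)=1, and suppose J = {x^{2^h}+x : x in GF(q)} does not contain 1 (which holds when m is odd). Then for any (u1,v1), (u2,v2) in GF(q)* × GF(2) with (u1 J + u1 v1) ≠ (u2 J + u2 v2), the intersection (u1 J + u1 v1) ∩ (u2 J + u2 v2) has size 0 or q/4, assuming J \ {0} is a (q-1,(q-2)/2,(q-4)/4) difference set and J+1 is a (q-1, q/2, q/4) difference set in GF(q)*. -/
private lemma pow2_inj' {F : Type*} [Field F] [CharP F 2] (n : ℕ) {z w : F}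
    (h : z ^ 2 ^ n = w ^ 2 ^ n) : z = w := by
  apply Function.Injective.iterate (frobenius_inj F 2) n
  rwa [iterate_frobenius, iterate_frobenius]

private lemma pow2_mul_fix' {F : Type*} [Field F] {x : F} (a : ℕ) (hx : x ^ 2 ^ a = x) :
    ∀ k, x ^ 2 ^ (a * k) = x := by
  intro k
  induction k with
  | zero => simp
  | succ k ih =>
    have : x ^ 2 ^ (a * (k+1)) = (x ^ 2 ^ (a * k)) ^ 2 ^ a := by
      rw [← pow_mul, ← pow_add, Nat.mul_succ]
    rw [this, ih, hx]

private lemma pow2_gcd_fix' {F : Type*} [Field F] [CharP F 2] :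
    ∀ a b (x : F), x ^ 2 ^ a = x → x ^ 2 ^ b = x → x ^ 2 ^ Nat.gcd a b = x := by
  intro a b
  induction a, b using Nat.gcd.induction with
  | H0 b => intro x _ hb; simpa using hb
  | H1 a b ha ih =>
    intro x hxa hxb
    have key : x ^ 2 ^ (b % a) = x := by
      have hb' : x ^ 2 ^ (a * (b / a) + b % a) = x := by
        rw [Nat.add_comm, Nat.mod_add_div]; exact hxb
      have h2 : (x ^ 2 ^ (b % a)) ^ 2 ^ (a * (b / a)) = x ^ 2 ^ (a * (b / a)) := by
        rw [← pow_mul, ← pow_add, Nat.add_comm]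
        rw [pow2_mul_fix' a hxa (b / a)]
        exact hb'
      exact pow2_inj' _ h2
    rw [Nat.gcd_rec]
    exact ih x key hxa

private lemma char_two_of_card' {F : Type*} [Field F] [Fintype F] (m : ℕ)
    (hq : Fintype.card F = 2 ^ m) : CharP F 2 := by
  obtain ⟨p, hp⟩ := CharP.exists F
  haveI := hp
  haveI hpp : Fact p.Prime := ⟨(CharP.char_is_prime F p)⟩
  obtain ⟨n, hcard⟩ := FiniteField.card F p
  rw [hq] at hcard
  have h2 : p = 2 := by
    have h1 : p ∣ 2 ^ m := hcard.2 ▸ dvd_pow_self p n.2.ne'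
    have := (Nat.Prime.dvd_of_dvd_pow hpp.out h1)
    exact (Nat.prime_dvd_prime_iff_eq hpp.out Nat.prime_two).mp this
  rwa [h2] at hp

private noncomputable def phi' (F : Type*) [Field F] [CharP F 2] (h : ℕ) : F →+ F where
  toFun x := x ^ 2 ^ h + x
  map_zero' := by simp [zero_pow (Nat.pos_of_ne_zero (pow_ne_zero h two_ne_zero)).ne']
  map_add' x y := by
    show (x + y) ^ 2 ^ h + (x + y) = _
    rw [add_pow_char_pow]
    ring

private lemma phi_ker' {F : Type*} [Field F] [Fintype F] [CharP F 2] (m h : ℕ)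
    (hq : Fintype.card F = 2 ^ m) (hh : Nat.gcd h m = 1) (x : F) :
    phi' F h x = 0 ↔ x = 0 ∨ x = 1 := by
  constructor
  · intro hx
    have hfix : x ^ 2 ^ h = x := by
      have := CharTwo.add_eq_iff_eq_add.mp hx
      simpa using this
    have hcard : x ^ 2 ^ m = x := by rw [← hq]; exact FiniteField.pow_card x
    have := pow2_gcd_fix' h m x hfix hcard
    rw [hh, pow_one, sq] at this
    rcases eq_or_ne x 0 with h0 | h0
    · exact Or.inl h0
    · right; exact mul_left_cancel₀ h0 (this.trans (mul_one x).symm)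
  · rintro (rfl | rfl) <;> simp [phi']
    · exact CharTwo.add_self_eq_zero 1

private lemma card_J' {F : Type*} [Field F] [Fintype F] [CharP F 2] (m h : ℕ) (hm : 1 ≤ m)
    (hq : Fintype.card F = 2 ^ m) (hh : Nat.gcd h m = 1) :
    Set.ncard {y : F | ∃ x : F, y = x ^ (2 ^ h) + x} = 2 ^ (m - 1) := by
  have hJr : {y : F | ∃ x : F, y = x ^ (2 ^ h) + x} = ((phi' F h).range : Set F) := by
    ext y; simp [phi', eq_comm, AddMonoidHom.mem_range]
  rw [hJr]
  have hker : ((phi' F h).ker : Set F) = {0, 1} := by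
    ext x; simpa [AddMonoidHom.mem_ker] using phi_ker' m h hq hh x
  have hkcard : Nat.card (phi' F h).ker = 2 := by
    have h0 : Nat.card (phi' F h).ker = Set.ncard ((phi' F h).ker : Set F) := rfl
    rw [h0, hker, Set.ncard_pair (zero_ne_one)]
  have hquot := AddSubgroup.card_eq_card_quotient_mul_card_addSubgroup (phi' F h).ker
  have hrange : Nat.card (phi' F h).range = Nat.card (F ⧸ (phi' F h).ker) :=
    (Nat.card_congr (QuotientAddGroup.quotientKerEquivRange (phi' F h)).toEquiv).symm
  have hcF : Nat.card F = 2 ^ m := by rw [Nat.card_eq_fintype_card, hq]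
  have h2 : 2 ^ m = Nat.card (F ⧸ (phi' F h).ker) * 2 := by rw [← hcF, hquot, hkcard]
  have hqc : Nat.card (F ⧸ (phi' F h).ker) = 2 ^ (m - 1) := by
    have hpow : 2 ^ m = 2 ^ (m - 1) * 2 := by
      rw [← pow_succ, Nat.sub_add_cancel hm]
    omega
  have hfin : Set.ncard ((phi' F h).range : Set F) = Nat.card (phi' F h).range := rfl
  rw [hfin, hrange]; omega

theorem stmt_17 {F : Type*} [Field F] [Fintype F] (m h : ℕ) (hm : 3 ≤ m)
    (hq : Fintype.card F = 2 ^ m) (hh : Nat.gcd h m = 1)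
    (J : Set F) (hJ : J = {y : F | ∃ x : F, y = x ^ (2 ^ h) + x})
    (h1 : (1 : F) ∉ J)
    -- J \ {0} is a (q-1, (q-2)/2, (q-4)/4) difference set in GF(q)^*:
    -- distinct multiplicative translates meet in exactly (q-4)/4 elements
    (hds1 : ∀ g₁ g₂ : F, g₁ ≠ 0 → g₂ ≠ 0 → g₁ ≠ g₂ →
      Set.ncard ((fun j => g₁ * j) '' (J \ {0}) ∩ (fun j => g₂ * j) '' (J \ {0})) =
        (2 ^ m - 4) / 4)
    -- J + 1 is a (q-1, q/2, q/4) difference set in GF(q)^*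
    (hds2 : ∀ g₁ g₂ : F, g₁ ≠ 0 → g₂ ≠ 0 → g₁ ≠ g₂ →
      Set.ncard ((fun j => g₁ * j) '' ((fun j => j + 1) '' J) ∩
          (fun j => g₂ * j) '' ((fun j => j + 1) '' J)) = 2 ^ m / 4)
    (u₁ u₂ v₁ v₂ : F) (hu₁ : u₁ ≠ 0) (hu₂ : u₂ ≠ 0)
    (hv₁ : v₁ = 0 ∨ v₁ = 1) (hv₂ : v₂ = 0 ∨ v₂ = 1)
    (hne : (fun j => u₁ * j + u₁ * v₁) '' J ≠ (fun j => u₂ * j + u₂ * v₂) '' J) :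
    Set.ncard ((fun j => u₁ * j + u₁ * v₁) '' J ∩ (fun j => u₂ * j + u₂ * v₂) '' J) = 0 ∨
    Set.ncard ((fun j => u₁ * j + u₁ * v₁) '' J ∩ (fun j => u₂ * j + u₂ * v₂) '' J) =
      2 ^ m / 4 := by
  haveI hchar : CharP F 2 := char_two_of_card' m hq
  have hm1 : 1 ≤ m := by omega
  have hpow4 : 2 ^ m = 4 * 2 ^ (m - 2) := by
    have : 2 ^ m = 2 ^ (m - 2) * 2 ^ 2 := by rw [← pow_add, Nat.sub_add_cancel (by omega)]
    omega
  have hpow2 : 2 ^ m = 2 * 2 ^ (m - 1) := by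
    have : 2 ^ m = 2 ^ (m - 1) * 2 ^ 1 := by rw [← pow_add, Nat.sub_add_cancel hm1]
    omega
  have hpow12 : 2 ^ (m - 1) = 2 * 2 ^ (m - 2) := by
    have he : m - 1 = (m - 2) + 1 := by omega
    rw [he, pow_succ]; omega
  have hJcard : J.ncard = 2 ^ (m - 1) := by rw [hJ]; exact card_J' m h hm1 hq hh
  have h0J : (0 : F) ∈ J := by
    rw [hJ]
    exact ⟨0, by simp [zero_pow (Nat.pos_of_ne_zero (pow_ne_zero h two_ne_zero)).ne']⟩
  have haddJ : ∀ a ∈ J, ∀ b ∈ J, a + b ∈ J := by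
    rw [hJ]
    rintro a ⟨x, rfl⟩ b ⟨y, rfl⟩
    exact ⟨x + y, by rw [add_pow_char_pow]; ring⟩
  -- complement
  have hcompl : (fun j => j + 1) '' J = Jᶜ := by
    have hsub : (fun j => j + 1) '' J ⊆ Jᶜ := by
      rintro _ ⟨a, ha, rfl⟩ hmem
      apply h1
      have hsum : (a + 1) + a ∈ J := haddJ _ hmem _ ha
      have he : (a + 1) + a = 1 := by
        have h2 : a + a = 0 := CharTwo.add_self_eq_zero a
        calc (a + 1) + a = (a + a) + 1 := by ring
          _ = 1 := by rw [h2, zero_add]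
      rwa [he] at hsum
    have hic : ((fun j => j + 1) '' J).ncard = 2 ^ (m - 1) := by
      rw [Set.ncard_image_of_injective _ (add_left_injective 1), hJcard]
    have hcc : (Jᶜ).ncard = 2 ^ (m - 1) := by
      have := Set.ncard_add_ncard_compl J
      rw [hJcard, Nat.card_eq_fintype_card, hq] at this
      omega
    exact Set.eq_of_subset_of_ncard_le hsub (by rw [hic, hcc]) (Set.toFinite _)
  -- J∩J intersection card for distinct multipliers
  have hJJ : ∀ a b : F, a ≠ 0 → b ≠ 0 → a ≠ b →
      ((fun j => a * j) '' J ∩ (fun j => b * j) '' J).ncard = 2 ^ m / 4 := by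
    intro a b ha hb hab
    have hsplit : ∀ c : F, (fun j => c * j) '' J =
        insert 0 ((fun j => c * j) '' (J \ {0})) := by
      intro c
      have hJi : J = insert 0 (J \ {0}) := by
        rw [Set.insert_diff_singleton, Set.insert_eq_of_mem h0J]
      conv_lhs => rw [hJi]
      rw [Set.image_insert_eq, mul_zero]
    have h0a : (0 : F) ∉ (fun j => a * j) '' (J \ {0}) := by
      rintro ⟨j, ⟨_, hj0⟩, hj⟩
      exact hj0 ((mul_eq_zero.mp hj).resolve_left ha)
    have h0b : (0 : F) ∉ (fun j => b * j) '' (J \ {0}) := by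
      rintro ⟨j, ⟨_, hj0⟩, hj⟩
      exact hj0 ((mul_eq_zero.mp hj).resolve_left hb)
    have hins : (fun j => a * j) '' J ∩ (fun j => b * j) '' J =
        insert 0 ((fun j => a * j) '' (J \ {0}) ∩ (fun j => b * j) '' (J \ {0})) := by
      rw [hsplit a, hsplit b]
      ext x
      simp only [Set.mem_inter_iff, Set.mem_insert_iff]
      tauto
    rw [hins, Set.ncard_insert_of_notMem (by simp [h0a]) (Set.toFinite _),
      hds1 a b ha hb hab]
    have hk : 1 ≤ 2 ^ (m - 2) := Nat.one_le_two_pow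
    rw [hpow4]
    omega
  -- card of u·J image
  have himc : ∀ c : F, c ≠ 0 → ((fun j => c * j) '' J).ncard = 2 ^ (m - 1) := by
    intro c hc
    rw [Set.ncard_image_of_injective _ (mul_right_injective₀ hc), hJcard]
  -- mixed intersection
  have hmix : ∀ a b : F, a ≠ 0 → b ≠ 0 →
      ((fun j => a * j) '' J ∩ (fun j => b * j) '' ((fun j => j + 1) '' J)).ncard = 0 ∨
      ((fun j => a * j) '' J ∩ (fun j => b * j) '' ((fun j => j + 1) '' J)).ncard
        = 2 ^ m / 4 := by
    intro a b ha hb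
    have hbij : Function.Bijective (fun j : F => b * j) :=
      ⟨mul_right_injective₀ hb, fun y => ⟨b⁻¹ * y, by field_simp⟩⟩
    have hBc : (fun j => b * j) '' ((fun j => j + 1) '' J) = ((fun j => b * j) '' J)ᶜ := by
      rw [hcompl, Set.image_compl_eq hbij]
    rcases eq_or_ne a b with rfl | hab
    · left
      rw [hBc, Set.inter_compl_self, Set.ncard_empty]
    · right
      rw [hBc, ← Set.diff_eq]
      have := Set.ncard_inter_add_ncard_diff_eq_ncard ((fun j => a * j) '' J)
        ((fun j => b * j) '' J) (Set.toFinite _)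
      rw [hJJ a b ha hb hab, himc a ha] at this
      omega
  -- now the case analysis
  rcases hv₁ with rfl | rfl <;> rcases hv₂ with rfl | rfl <;>
    simp only [mul_zero, mul_one, add_zero] at hne ⊢
  · -- v₁ = 0, v₂ = 0
    rcases eq_or_ne u₁ u₂ with rfl | hab
    · exact absurd rfl hne
    · exact Or.inr (hJJ u₁ u₂ hu₁ hu₂ hab)
  · -- v₁ = 0, v₂ = 1
    have e2 : (fun j => u₂ * j + u₂) '' J = (fun j => u₂ * j) '' ((fun j => j + 1) '' J) := by
      rw [Set.image_image]; exact Set.image_congr' (fun j => by ring)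
    rw [e2]
    exact hmix u₁ u₂ hu₁ hu₂
  · -- v₁ = 1, v₂ = 0
    have e1 : (fun j => u₁ * j + u₁) '' J = (fun j => u₁ * j) '' ((fun j => j + 1) '' J) := by
      rw [Set.image_image]; exact Set.image_congr' (fun j => by ring)
    rw [e1, Set.inter_comm]
    exact hmix u₂ u₁ hu₂ hu₁
  · -- v₁ = 1, v₂ = 1
    have e1 : (fun j => u₁ * j + u₁) '' J = (fun j => u₁ * j) '' ((fun j => j + 1) '' J) := by
      rw [Set.image_image]; exact Set.image_congr' (fun j => by ring)
    have e2 : (fun j => u₂ * j + u₂) '' J = (fun j => u₂ * j) '' ((fun j => j + 1) '' J) := by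
      rw [Set.image_image]; exact Set.image_congr' (fun j => by ring)
    rcases eq_or_ne u₁ u₂ with rfl | hab
    · exact absurd rfl hne
    · rw [e1, e2]
      exact Or.inr (hds2 u₁ u₂ hu₁ hu₂ hab)
end

section
/- Let q = 2^m with m ≥ 2 and gcd(h, m) = 1; set f(x) = x^{2^h}. Then for every b in GF(q)* the map x ↦ x^{2^h} + bx is GF(2)-linear and 2-to-1 (its kernel has exactly 2 elements), so x^{2^h} is an o-polynomial. -/
/-- Every fibre of an additive homomorphism is a translate of its kernel. -/
theorem AddMonoidHom.ncard_fiber_eq_ncard_ker {G H : Type*} [AddGroup G] [AddGroup H]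
    (f : G →+ H) (x₀ : G) : {x : G | f x = f x₀}.ncard = {x : G | f x = 0}.ncard := by
  have hfiber : {x : G | f x = f x₀} = (x₀ + ·) '' {x : G | f x = 0} := by
    ext x
    constructor
    · intro (hx : f x = f x₀)
      exact ⟨-x₀ + x, by simp [hx], by simp⟩
    · rintro ⟨k, hk, rfl⟩
      simp_all
  rw [hfiber, Set.ncard_image_of_injective _ (add_right_injective x₀)]

/-- The roots of `x ^ (k + 1) = c * x` are `0` and the unique `k`-th root of `c`. -/
theorem ncard_setOf_pow_succ_eq_mul {F : Type*} [Field F] [Finite F] {k : ℕ}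
    (hk : (Nat.card Fˣ).Coprime k) {c : F} (hc : c ≠ 0) :
    {x : F | x ^ (k + 1) = c * x}.ncard = 2 := by
  obtain ⟨a, ha⟩ := (powCoprime hk).surjective (Units.mk0 c hc)
  have hroots : {x : F | x ^ (k + 1) = c * x} = {0, (a : F)} := by
    ext x
    simp only [Set.mem_ofPred_eq, Set.mem_insert_iff, Set.mem_singleton_iff]
    rcases eq_or_ne x 0 with rfl | hx
    · simp
    have hpow : x ^ (k + 1) = c * x ↔ Units.mk0 x hx ^ k = Units.mk0 c hc := by
      rw [pow_succ, mul_left_inj' hx, Units.ext_iff]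
      simp
    rw [hpow, ← ha]
    change powCoprime hk (Units.mk0 x hx) = powCoprime hk a ↔ _
    rw [Equiv.apply_eq_iff_eq, Units.ext_iff]
    simp [hx]
  rw [hroots, Set.ncard_pair a.ne_zero.symm]

theorem coprime_card_units_two_pow_sub_one {F : Type*} [Field F] [Fintype F] {m h : ℕ}
    (hq : Fintype.card F = 2 ^ m) (hh : Nat.gcd h m = 1) :
    (Nat.card Fˣ).Coprime (2 ^ h - 1) := by
  rw [Nat.card_units, Nat.card_eq_fintype_card, hq, Nat.Coprime,
    Nat.pow_sub_one_gcd_pow_sub_one, Nat.gcd_comm, hh, pow_one]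

theorem stmt_19_general {F : Type*} [Field F] [Fintype F] (m h : ℕ)
    (hq : Fintype.card F = 2 ^ m) (hh : Nat.gcd h m = 1) :
    ∀ b : F, b ≠ 0 →
      (∀ x y : F, (x + y) ^ (2 ^ h) + b * (x + y) =
        (x ^ (2 ^ h) + b * x) + (y ^ (2 ^ h) + b * y)) ∧
      Set.ncard {x : F | x ^ (2 ^ h) + b * x = 0} = 2 ∧
      TwoToOne (fun x : F => x ^ (2 ^ h) + b * x) := by
  have : CharP F 2 := charP_of_card_eq_prime_pow hq
  intro b hb
  let L : F →+ F := (iterateFrobenius F 2 h).toAddMonoidHom + AddMonoidHom.mulLeft b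
  have hL : ∀ x, L x = x ^ (2 ^ h) + b * x := fun x => rfl
  have hker : {x : F | x ^ (2 ^ h) + b * x = 0}.ncard = 2 := by
    have hroots := ncard_setOf_pow_succ_eq_mul (coprime_card_units_two_pow_sub_one hq hh) hb
    rw [Nat.sub_add_cancel Nat.one_le_two_pow] at hroots
    simpa only [CharTwo.add_eq_zero] using hroots
  refine ⟨fun x y => by simpa only [hL] using map_add L x y, hker, ?_⟩
  rintro y ⟨x₀, rfl⟩
  simpa only [hL] using (L.ncard_fiber_eq_ncard_ker x₀).trans hker

theorem stmt_19 {F : Type*} [Field F] [Fintype F] (m h : ℕ) (hm : 2 ≤ m)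
    (hq : Fintype.card F = 2 ^ m) (hh : Nat.gcd h m = 1) :
    ∀ b : F, b ≠ 0 →
      (∀ x y : F, (x + y) ^ (2 ^ h) + b * (x + y) =
        (x ^ (2 ^ h) + b * x) + (y ^ (2 ^ h) + b * y)) ∧
      Set.ncard {x : F | x ^ (2 ^ h) + b * x = 0} = 2 ∧
      TwoToOne (fun x : F => x ^ (2 ^ h) + b * x) :=
  stmt_19_general m h hq hh
end
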